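/- arXiv:math/0504034 — 3 statements merged into one kernel-verified Lean document; each statement's English description precedes it below -/
import Mathlib

section
/- For any positive real numbers m and p, the limit as n → ∞ of the ratio (∑_{j=1}^n j^m/(1+j^{m+1})) / (∑_{j=1}^n j^p/(1+j^{p+1})) equals 1. -/
/-!
For `j ≥ 1` and `m ≥ 0`, the summand `j^m / (1 + j^(m+1))` differs from `1/j` by
`1 / (j (1 + j^(m+1))) ≤ 1/j²`. Hence both partial sums differ from the harmonic numbers by a
bounded amount, and since the harmonic numbers diverge, both are asymptotically equivalent to them,
hence to each other.
-/

open Filter Finset Asymptotics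

theorem Asymptotics.IsEquivalent.sum_range_of_summable_sub {f g : ℕ → ℝ}
    (hfg : Summable (f - g)) (hg : Tendsto (fun n ↦ ∑ i ∈ range n, g i) atTop atTop) :
    (fun n ↦ ∑ i ∈ range n, f i) ~[atTop] fun n ↦ ∑ i ∈ range n, g i := by
  have hbdd : (fun n ↦ ∑ i ∈ range n, (f - g) i) =O[atTop] fun _ ↦ (1 : ℝ) :=
    hfg.hasSum.tendsto_sum_nat.isBigO_one ℝ
  have hone : (fun _ ↦ (1 : ℝ)) =o[atTop] fun n ↦ ∑ i ∈ range n, g i :=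
    (isLittleO_one_left_iff ℝ).mpr (tendsto_norm_atTop_atTop.comp hg)
  refine (hbdd.trans_isLittleO hone).congr_left fun n ↦ ?_
  simp [sum_sub_distrib]

lemma inv_sub_rpow_div_one_add_rpow_add_one (m : ℝ) {x : ℝ} (hx : 0 < x) :
    x⁻¹ - x ^ m / (1 + x ^ (m + 1)) = (x * (1 + x ^ (m + 1)))⁻¹ := by
  have hx1 : x ^ (m + 1) = x ^ m * x := by rw [Real.rpow_add hx, Real.rpow_one]
  field_simp
  rw [hx1]
  ring

lemma inv_mul_one_add_rpow_add_one_le {m x : ℝ} (hm : 0 ≤ m) (hx : 1 ≤ x) :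
    (x * (1 + x ^ (m + 1)))⁻¹ ≤ (x ^ 2)⁻¹ := by
  have hx_le : x ≤ x ^ (m + 1) := Real.self_le_rpow_of_one_le hx (by linarith)
  gcongr
  nlinarith

lemma summable_inv_sub_rpow_div_one_add_rpow_add_one {m : ℝ} (hm : 0 ≤ m) :
    Summable fun i : ℕ ↦ ((i + 1 : ℝ))⁻¹ - (i + 1 : ℝ) ^ m / (1 + (i + 1 : ℝ) ^ (m + 1)) := by
  have hsq : Summable fun i : ℕ ↦ (((i + 1 : ℕ) : ℝ) ^ 2)⁻¹ :=
    (summable_nat_add_iff 1).mpr (Real.summable_nat_pow_inv.mpr one_lt_two)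
  refine hsq.of_nonneg_of_le (fun i ↦ ?_) (fun i ↦ ?_) <;>
    rw [inv_sub_rpow_div_one_add_rpow_add_one m (by positivity)]
  · positivity
  · push_cast
    exact inv_mul_one_add_rpow_add_one_le hm (by simp)

lemma sum_Icc_one_eq_sum_range {M : Type*} [AddCommMonoid M] (f : ℕ → M) (n : ℕ) :
    ∑ j ∈ Icc 1 n, f j = ∑ i ∈ range n, f (i + 1) := by
  rw [← Ico_add_one_right_eq_Icc, sum_Ico_eq_sum_range, Nat.add_sub_cancel]
  simp only [add_comm]

lemma tendsto_sum_range_inv_nat_succ_atTop :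
    Tendsto (fun n ↦ ∑ i ∈ range n, ((i + 1 : ℝ))⁻¹) atTop atTop := by
  simpa only [one_div] using Real.tendsto_sum_range_one_div_nat_succ_atTop

lemma isEquivalent_sum_rpow_div_one_add_rpow_add_one_harmonic {m : ℝ} (hm : 0 ≤ m) :
    (fun n : ℕ ↦ ∑ j ∈ Icc 1 n, (j : ℝ) ^ m / (1 + (j : ℝ) ^ (m + 1))) ~[atTop]
      fun n ↦ ∑ i ∈ range n, ((i + 1 : ℝ))⁻¹ := by
  have hdiff := (summable_inv_sub_rpow_div_one_add_rpow_add_one hm).neg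
  simp only [neg_sub] at hdiff
  simpa [sum_Icc_one_eq_sum_range] using
    IsEquivalent.sum_range_of_summable_sub (g := fun i : ℕ ↦ ((i + 1 : ℝ))⁻¹) hdiff
      tendsto_sum_range_inv_nat_succ_atTop

theorem example_one (m p : ℝ) (hm : 0 < m) (hp : 0 < p) :
    Tendsto (fun n : ℕ =>
      (∑ j ∈ Finset.Icc 1 n, (j : ℝ) ^ m / (1 + (j : ℝ) ^ (m + 1))) /
      (∑ j ∈ Finset.Icc 1 n, (j : ℝ) ^ p / (1 + (j : ℝ) ^ (p + 1))))
      atTop (nhds 1) := by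
  have hm_equiv := isEquivalent_sum_rpow_div_one_add_rpow_add_one_harmonic hm.le
  have hp_equiv := isEquivalent_sum_rpow_div_one_add_rpow_add_one_harmonic hp.le
  have hp_ne_zero :=
    (hp_equiv.tendsto_atTop_iff.mpr tendsto_sum_range_inv_nat_succ_atTop).eventually_ne_atTop 0
  exact (isEquivalent_iff_tendsto_one hp_ne_zero).mp (hm_equiv.trans hp_equiv.symm)
end

section
/- Let (a_n) and (b_n) be real sequences with 0 < a_n < 1 for all n, b_n ≥ 0 for all n, b_{n-1}/a_n → 0 as n → ∞, and ∑_{n=1}^∞ a_n = ∞. Then ∑_{k=1}^{n-1} b_k ∏_{j=k+1}^n (1 - a_j) → 0 as n → ∞. -/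
/-!
The convolution term `J = convTerm a b` satisfies `J (n + 1) = (1 - a (n + 1)) * (J n + b n)`,
so it is a nonnegative solution of `g (n + 1) ≤ (1 - a' n) * g n + b n` with `a' n = a (n + 1)`
and `b n / a' n → 0`. For such `g` and any `δ > 0`, once `b n ≤ δ * a' n` the excess
`max (g n - δ) 0` contracts by the factor `1 - a' n ≤ exp (-a' n)`, hence is bounded by a
multiple of `exp (-∑ a' j) → 0`. So eventually `g n < 2 * δ`.
-/

open Filter Finset Topology

theorem le_mul_exp_neg_sum_Ico_of_le_one_sub_mul {u a : ℕ → ℝ} {N : ℕ} (hu : ∀ n ≥ N, 0 ≤ u n)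
    (hrec : ∀ n ≥ N, u (n + 1) ≤ (1 - a n) * u n) :
    ∀ n ≥ N, u n ≤ u N * Real.exp (-∑ j ∈ Ico N n, a j) := by
  intro n hn
  induction n, hn using Nat.le_induction with
  | base => simp
  | succ n hn ih =>
    calc u (n + 1) ≤ (1 - a n) * u n := hrec n hn
      _ ≤ Real.exp (-a n) * u n := by
        gcongr
        · exact hu n hn
        · linarith [Real.add_one_le_exp (-a n)]
      _ ≤ Real.exp (-a n) * (u N * Real.exp (-∑ j ∈ Ico N n, a j)) := by gcongr
      _ = u N * Real.exp (-∑ j ∈ Ico N (n + 1), a j) := by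
        rw [sum_Ico_succ_top hn, neg_add, Real.exp_add]
        ring

theorem tendsto_exp_neg_sum_Ico_atTop {a : ℕ → ℝ} (N : ℕ)
    (ha : Tendsto (fun n => ∑ j ∈ range n, a j) atTop atTop) :
    Tendsto (fun n => Real.exp (-∑ j ∈ Ico N n, a j)) atTop (𝓝 0) := by
  have hIco : Tendsto (fun n => ∑ j ∈ Ico N n, a j) atTop atTop := by
    refine (tendsto_atTop_add_const_right _ (-∑ j ∈ range N, a j) ha).congr' ?_
    filter_upwards [eventually_ge_atTop N] with n hn
    rw [sum_Ico_eq_sub _ hn, sub_eq_add_neg]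
  exact Real.tendsto_exp_neg_atTop_nhds_zero.comp hIco

theorem tendsto_zero_of_le_one_sub_mul_add {g a b : ℕ → ℝ} (hg : ∀ n, 0 ≤ g n)
    (ha : ∀ n, 0 < a n) (ha1 : ∀ n, a n ≤ 1)
    (hrec : ∀ᶠ n in atTop, g (n + 1) ≤ (1 - a n) * g n + b n)
    (hba : Tendsto (fun n => b n / a n) atTop (𝓝 0))
    (hdiv : Tendsto (fun n => ∑ j ∈ range n, a j) atTop atTop) :
    Tendsto g atTop (𝓝 0) := by
  refine tendsto_order.2 ⟨fun c hc => Eventually.of_forall fun n => hc.trans_le (hg n),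
    fun ε hε => ?_⟩
  set δ := ε / 2 with hδ_def
  have hδ : 0 < δ := half_pos hε
  obtain ⟨N, hN⟩ := eventually_atTop.1 <|
    hrec.and <| (hba.eventually (gt_mem_nhds hδ)).mono fun n hn => (div_lt_iff₀ (ha n)).1 hn
  set u := fun n => max (g n - δ) 0
  have hu : ∀ n ≥ N, u (n + 1) ≤ (1 - a n) * u n := by
    intro n hn
    obtain ⟨hgn, hbn⟩ := hN n hn
    have h1a : 0 ≤ 1 - a n := sub_nonneg.2 (ha1 n)
    refine max_le ?_ (mul_nonneg h1a (le_max_right _ _))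
    calc g (n + 1) - δ ≤ (1 - a n) * (g n - δ) := by linarith
      _ ≤ (1 - a n) * u n := by gcongr; exact le_max_left _ _
  have hu0 : Tendsto u atTop (𝓝 0) := by
    refine squeeze_zero' (Eventually.of_forall fun n => le_max_right _ _)
      (eventually_atTop.2 ⟨N, le_mul_exp_neg_sum_Ico_of_le_one_sub_mul
        (fun n _ => le_max_right _ _) hu⟩) ?_
    simpa using (tendsto_exp_neg_sum_Ico_atTop N hdiv).const_mul (u N)
  filter_upwards [hu0.eventually (gt_mem_nhds hδ)] with n hn
  linarith [(le_max_left (g n - δ) 0).trans_lt hn]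

def convTerm (a b : ℕ → ℝ) (n : ℕ) : ℝ :=
  ∑ k ∈ Icc 1 (n - 1), b k * ∏ j ∈ Icc (k + 1) n, (1 - a j)

theorem convTerm_succ (a b : ℕ → ℝ) {n : ℕ} (hn : 1 ≤ n) :
    convTerm a b (n + 1) = (1 - a (n + 1)) * (convTerm a b n + b n) := by
  obtain ⟨m, rfl⟩ := Nat.exists_eq_add_of_le' hn
  have hprod : ∀ k ∈ Icc 1 m, ∏ j ∈ Icc (k + 1) (m + 2), (1 - a j) =
      (∏ j ∈ Icc (k + 1) (m + 1), (1 - a j)) * (1 - a (m + 2)) := fun k hk =>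
    prod_Icc_succ_top (by grind) _
  simp only [convTerm, Nat.add_sub_cancel]
  rw [sum_Icc_succ_top (by omega), sum_congr rfl fun k hk => by rw [hprod k hk], Icc_self,
    prod_singleton]
  simp_rw [← mul_assoc, ← sum_mul]
  ring

theorem convTerm_nonneg {a b : ℕ → ℝ} (ha : ∀ n, a n ≤ 1) (hb : ∀ n, 0 ≤ b n) (n : ℕ) :
    0 ≤ convTerm a b n :=
  sum_nonneg fun k _ => mul_nonneg (hb k) (prod_nonneg fun j _ => sub_nonneg.2 (ha j))

theorem sum_range_add_one_eq_sum_Icc {M : Type*} [AddCommMonoid M] (a : ℕ → M) (n : ℕ) :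
    ∑ j ∈ range n, a (j + 1) = ∑ j ∈ Icc 1 n, a j := by
  rw [range_eq_Ico, sum_Ico_add']
  rfl

theorem conv_term_tendsto_zero (a b : ℕ → ℝ)
    (ha : ∀ n, 0 < a n ∧ a n < 1)
    (hb : ∀ n, 0 ≤ b n)
    (hba : Tendsto (fun n => b (n - 1) / a n) atTop (nhds 0))
    (hdiv : Tendsto (fun n => ∑ j ∈ Finset.Icc 1 n, a j) atTop atTop) :
    Tendsto (fun n => ∑ k ∈ Finset.Icc 1 (n - 1),
      b k * ∏ j ∈ Finset.Icc (k + 1) n, (1 - a j)) atTop (nhds 0) := by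
  have ha1 : ∀ n, a n ≤ 1 := fun n => (ha n).2.le
  refine tendsto_zero_of_le_one_sub_mul_add (g := convTerm a b) (a := fun n => a (n + 1)) (b := b)
    (convTerm_nonneg ha1 hb) (fun _ => (ha _).1) (fun _ => ha1 _) ?_ ?_ ?_
  · filter_upwards [eventually_ge_atTop 1] with n hn
    rw [convTerm_succ a b hn, mul_add]
    gcongr
    exact mul_le_of_le_one_left (hb n) (by linarith [(ha (n + 1)).1])
  · simpa [Function.comp_def] using hba.comp (tendsto_add_atTop_nat 1)
  · simpa only [sum_range_add_one_eq_sum_Icc] using hdiv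
end

section
/- Let (a_n), (b_n), (g_n) be real sequences with 0 < a_n < 1 for all n, b_n ≥ 0 and g_n ≥ 0 for all n, b_{n-1}/a_n → 0 as n → ∞, ∑_{n=1}^∞ a_n = ∞, and g_{n+1} ≤ (1 - a_n) g_n + b_n for all n ≥ 1. Then g_n → 0 as n → ∞. -/
/-!
Fix `c > 0`. Since `b n ≤ c * a (n + 1)` eventually, the shifted sequence
`u n = g n - c * (1 + a n)` satisfies `u (n + 1) ≤ (1 - a n) * u n`, so `u n` is bounded by
`u N` times the tail product `∏ (1 - a j) ≤ exp (-∑ a j)`, which tends to `0` because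
`∑ a j` diverges. Hence `g n < 3 c` eventually.
-/

open Filter Finset

theorem tendsto_sum_Ico_of_tendsto_sum_Icc {a : ℕ → ℝ} {M : ℕ}
    (h : Tendsto (fun n => ∑ j ∈ Icc M n, a j) atTop atTop) (N : ℕ) :
    Tendsto (fun n => ∑ j ∈ Ico N n, a j) atTop atTop := by
  rw [← tendsto_add_atTop_iff_nat 1]
  refine (tendsto_atTop_add_const_right _ (∑ j ∈ range M, a j - ∑ j ∈ range N, a j) h).congr' ?_
  filter_upwards [eventually_ge_atTop (M + N)] with n hn
  rw [← Ico_add_one_right_eq_Icc, sum_Ico_eq_sub _ (by omega), sum_Ico_eq_sub _ (by omega)]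
  ring

theorem prod_one_sub_le_exp_neg_sum {ι : Type*} (s : Finset ι) {a : ι → ℝ}
    (ha : ∀ j ∈ s, a j ≤ 1) : ∏ j ∈ s, (1 - a j) ≤ Real.exp (-∑ j ∈ s, a j) := by
  rw [← sum_neg_distrib, Real.exp_sum]
  exact prod_le_prod (fun j hj => sub_nonneg.2 (ha j hj))
    (fun j _ => by linarith [Real.add_one_le_exp (-a j)])

theorem tendsto_prod_one_sub_zero {a : ℕ → ℝ} {N : ℕ} (ha : ∀ j, a j ≤ 1)
    (hsum : Tendsto (fun n => ∑ j ∈ Ico N n, a j) atTop atTop) :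
    Tendsto (fun n => ∏ j ∈ Ico N n, (1 - a j)) atTop (nhds 0) :=
  squeeze_zero (fun _ => prod_nonneg fun j _ => sub_nonneg.2 (ha j))
    (fun _ => prod_one_sub_le_exp_neg_sum _ fun j _ => ha j)
    (Real.tendsto_exp_atBot.comp (tendsto_neg_atTop_atBot.comp hsum))

theorem le_prod_mul_of_succ_le_mul {r u : ℕ → ℝ} {N : ℕ} (hr : ∀ n ≥ N, 0 ≤ r n)
    (hu : ∀ n ≥ N, u (n + 1) ≤ r n * u n) :
    ∀ n ≥ N, u n ≤ (∏ j ∈ Ico N n, r j) * u N := by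
  intro n hn
  induction n, hn using Nat.le_induction with
  | base => simp
  | succ n hn ih =>
    calc u (n + 1) ≤ r n * u n := hu n hn
      _ ≤ r n * ((∏ j ∈ Ico N n, r j) * u N) := mul_le_mul_of_nonneg_left ih (hr n hn)
      _ = (∏ j ∈ Ico N (n + 1), r j) * u N := by rw [prod_Ico_succ_top hn]; ring

/-- The perturbation `b n` is compared with `a (n + 1)` rather than `a n`, which is why the
threshold `c * (1 + a n)` moves with `n`. -/
theorem eventually_lt_of_le_one_sub_mul_add {a b g : ℕ → ℝ} {c : ℝ} {N : ℕ} (hc : 0 ≤ c)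
    (ha : ∀ n, a n ≤ 1) (hsum : Tendsto (fun n => ∑ j ∈ Ico N n, a j) atTop atTop)
    (hbc : ∀ n ≥ N, b n ≤ c * a (n + 1))
    (hrec : ∀ n ≥ N, g (n + 1) ≤ (1 - a n) * g n + b n) {δ : ℝ} (hδ : 0 < δ) :
    ∀ᶠ n in atTop, g n < c * (1 + a n) + δ := by
  set u : ℕ → ℝ := fun n => g n - c * (1 + a n)
  have hu : ∀ n ≥ N, u (n + 1) ≤ (1 - a n) * u n := fun n hn => by
    have := hrec n hn
    have := hbc n hn
    nlinarith [mul_nonneg hc (sq_nonneg (a n))]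
  have hbound := le_prod_mul_of_succ_le_mul (fun n _ => sub_nonneg.2 (ha n)) hu
  have hsmall : ∀ᶠ n in atTop, (∏ j ∈ Ico N n, (1 - a j)) * u N < δ := by
    refine ((tendsto_prod_one_sub_zero ha hsum).mul_const (u N)).eventually (gt_mem_nhds ?_)
    simpa using hδ
  filter_upwards [hsmall, eventually_ge_atTop N] with n hn hnN
  linarith [hbound n hnN]

theorem g_tendsto_zero_general (a b g : ℕ → ℝ)
    (ha : ∀ n, 0 < a n ∧ a n < 1)
    (hg : ∀ n, 0 ≤ g n)
    (hba : Tendsto (fun n => b (n - 1) / a n) atTop (nhds 0))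
    (hdiv : Tendsto (fun n => ∑ j ∈ Finset.Icc 1 n, a j) atTop atTop)
    (hrec : ∀ n ≥ 1, g (n + 1) ≤ (1 - a n) * g n + b n) :
    Tendsto g atTop (nhds 0) := by
  refine tendsto_order.2 ⟨fun ε hε => Eventually.of_forall fun n => hε.trans_le (hg n),
    fun ε hε => ?_⟩
  set c := ε / 3 with hcε
  have hc : 0 < c := by positivity
  have hba' : ∀ᶠ n in atTop, b n / a (n + 1) < c := by
    rw [← tendsto_add_atTop_iff_nat 1] at hba
    simpa using hba.eventually (gt_mem_nhds hc)
  obtain ⟨N, hN⟩ := eventually_atTop.1 (hba'.and (eventually_ge_atTop 1))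
  have hbc : ∀ n ≥ N, b n ≤ c * a (n + 1) := fun n hn => by
    have := (div_lt_iff₀ (ha (n + 1)).1).1 (hN n hn).1
    linarith
  filter_upwards [eventually_lt_of_le_one_sub_mul_add hc.le (fun n => (ha n).2.le)
    (tendsto_sum_Ico_of_tendsto_sum_Icc hdiv N) hbc (fun n hn => hrec n (hN n hn).2) hc]
    with n hn
  linarith [mul_le_of_le_one_right hc.le (ha n).2.le]

theorem g_tendsto_zero (a b g : ℕ → ℝ)
    (ha : ∀ n, 0 < a n ∧ a n < 1)
    (hb : ∀ n, 0 ≤ b n)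
    (hg : ∀ n, 0 ≤ g n)
    (hba : Tendsto (fun n => b (n - 1) / a n) atTop (nhds 0))
    (hdiv : Tendsto (fun n => ∑ j ∈ Finset.Icc 1 n, a j) atTop atTop)
    (hrec : ∀ n ≥ 1, g (n + 1) ≤ (1 - a n) * g n + b n) :
    Tendsto g atTop (nhds 0) :=
  g_tendsto_zero_general a b g ha hg hba hdiv hrec
end
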